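/- arXiv:2602.22665 — 2 statements merged into one kernel-verified Lean document; each statement's English description precedes it below -/
import Mathlib

section
/- (Composability of the canonical partial action.) Let S be an inverse semigroup, let χ : S → Bool be a character of S, and let s, t ∈ S. If χ(star(s·t)·(s·t)) = true, then χ(star(t)·t) = true and (θ_t χ)(star(s)·s) = true; moreover θ_s(θ_t(χ)) and θ_{s·t}(χ) agree on all of S. -/
/-!
`star (s * t) * (s * t)` is an idempotent lying below `star t * t` (it absorbs it on the right),
so a character that is `true` on it is `true` on `star t * t`. Everything else is the
anti-multiplicativity of `star` and associativity.
-/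

section RegularStar

variable {S : Type*} [Semigroup S] {star : S → S}

theorem isIdempotentElem_star_mul_self (hreg : ∀ s : S, s * star s * s = s) (x : S) :
    IsIdempotentElem (star x * x) := by
  calc star x * x * (star x * x) = star x * (x * star x * x) := by simp only [mul_assoc]
    _ = star x * x := by rw [hreg]

theorem mul_mul_star_mul_self (hreg : ∀ s : S, s * star s * s = s) (x t : S) :
    x * t * (star t * t) = x * t := by
  rw [mul_assoc x, ← mul_assoc t, hreg]

theorem star_mul_self_mul (hanti : ∀ s t : S, star (s * t) = star t * star s) (s t : S) :
    star (s * t) * (s * t) = star t * (star s * s) * t := by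
  rw [hanti]; simp only [mul_assoc]

theorem conj_star_mul (hanti : ∀ s t : S, star (s * t) = star t * star s) (s t e : S) :
    star (s * t) * e * (s * t) = star t * (star s * e * s) * t := by
  rw [hanti]; simp only [mul_assoc]

theorem apply_eq_true_of_mul_eq_self {χ : S → Bool}
    (hchar : ∀ e f : S, e * e = e → f * f = f → χ (e * f) = (χ e && χ f))
    {e f : S} (he : IsIdempotentElem e) (hf : IsIdempotentElem f) (hef : e * f = e)
    (hχ : χ e = true) : χ f = true := by
  have key := hchar e f he hf
  rw [hef, hχ, Bool.true_and] at key
  exact key.symm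

end RegularStar

theorem theta_composable_general {S : Type*} [Semigroup S] (star : S → S)
    (hanti : ∀ s t : S, star (s * t) = star t * star s)
    (hreg : ∀ s : S, s * star s * s = s)
    (χ : S → Bool)
    (hchar : ∀ e f : S, e * e = e → f * f = f → χ (e * f) = (χ e && χ f))
    (s t : S) (hst : χ (star (s * t) * (s * t)) = true) :
    χ (star t * t) = true ∧
    χ (star t * (star s * s) * t) = true ∧
    ∀ e : S, χ (star t * (star s * e * s) * t) = χ (star (s * t) * e * (s * t)) := by
  have habsorb : star (s * t) * (s * t) * (star t * t) = star (s * t) * (s * t) := by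
    simpa only [mul_assoc] using mul_mul_star_mul_self hreg (star (s * t) * s) t
  refine ⟨?_, star_mul_self_mul hanti s t ▸ hst, fun e => ?_⟩
  · exact apply_eq_true_of_mul_eq_self hchar (isIdempotentElem_star_mul_self hreg _)
      (isIdempotentElem_star_mul_self hreg t) habsorb hst
  · rw [conj_star_mul hanti]

/-- Composability of the canonical partial action: let `S` be an
inverse semigroup, `χ : S → Bool` a character, and `s t ∈ S`.  If
`χ (star (s*t) * (s*t)) = true`, then `χ (star t * t) = true` and
`(θ_t χ) (star s * s) = true`; moreover `θ_s (θ_t χ)` and `θ_{s*t} χ`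
agree on all of `S`. -/
theorem theta_composable {S : Type*} [Semigroup S] (star : S → S)
    (hinv : ∀ s : S, star (star s) = s)
    (hanti : ∀ s t : S, star (s * t) = star t * star s)
    (hreg : ∀ s : S, s * star s * s = s)
    (hcomm : ∀ e f : S, e * e = e → f * f = f → e * f = f * e)
    (χ : S → Bool)
    (hchar : ∀ e f : S, e * e = e → f * f = f → χ (e * f) = (χ e && χ f))
    (s t : S) (hst : χ (star (s * t) * (s * t)) = true) :
    χ (star t * t) = true ∧
    χ (star t * (star s * s) * t) = true ∧
    ∀ e : S, χ (star t * (star s * e * s) * t) = χ (star (s * t) * e * (s * t)) :=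
  theta_composable_general star hanti hreg χ hchar s t hst
end

section
/- (Twisted involution is anti-multiplicative.) Let G be a groupoid with finitely many objects and finite hom-sets, and let σ be a normalized 2-cocycle on G valued in complex numbers of modulus 1. For a function f from the morphisms of G to ℂ, define its adjoint f* by f*(γ) := conj(σ(γ, inv γ)) · conj(f(inv γ)). Then for all ℂ-valued functions f, g on the morphisms of G, (f ∗_σ g)* = g* ∗_σ f*, where ∗_σ denotes the twisted convolution. -/
open CategoryTheory

/-- Twisted convolution of `ℂ`-valued functions on the morphisms of a finite
groupoid, with respect to a `2`-cocycle `σ`. -/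
noncomputable def twistedConv {G : Type*} [Groupoid G] [Fintype G]
    [∀ a b : G, Fintype (a ⟶ b)]
    (σ : ∀ {a b c : G}, (a ⟶ b) → (b ⟶ c) → ℂ)
    (f g : ∀ a b : G, (a ⟶ b) → ℂ) (a c : G) (γ : a ⟶ c) : ℂ :=
  letI : DecidableEq (a ⟶ c) := Classical.decEq _
  ∑ b : G, ∑ α : a ⟶ b, ∑ β : b ⟶ c,
    if α ≫ β = γ then f a b α * g b c β * σ α β else 0

/-- The twisted adjoint `f* γ := conj (σ (γ, inv γ)) * conj (f (inv γ))`. -/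
noncomputable def twistedAdj {G : Type*} [Groupoid G]
    (σ : ∀ {a b c : G}, (a ⟶ b) → (b ⟶ c) → ℂ)
    (f : ∀ a b : G, (a ⟶ b) → ℂ) (a b : G) (γ : a ⟶ b) : ℂ :=
  starRingEnd ℂ (σ γ (Groupoid.inv γ)) * starRingEnd ℂ (f b a (Groupoid.inv γ))

/-!
Write `f ∗ g` at `inv γ` as a sum over its second factor and `g* ∗ f*` at `γ` as a sum over its
first factor `α`; substituting `inv α` for the former index, both sides become sums over `α`
with the same values of `f` and `g`. The remaining cocycle factors agree by the cocycle
identity at `(α, β, inv β ≫ inv α)` and `(β, inv β, inv α)` together with left normalization,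
conjugated; `|σ| = 1` moves `σ α β` to the other side.
-/

open ComplexConjugate

section Groupoid

variable {G : Type*} [Groupoid G] (σ : ∀ {a b c : G}, (a ⟶ b) → (b ⟶ c) → ℂ)

lemma cocycle_inv_comp
    (hcoc : ∀ {a b c d : G} (f : a ⟶ b) (g : b ⟶ c) (h : c ⟶ d),
      σ f g * σ (f ≫ g) h = σ g h * σ f (g ≫ h))
    (hnl : ∀ {a b : G} (g : a ⟶ b), σ (𝟙 a) g = 1)
    {a b c : G} (α : a ⟶ b) (β : b ⟶ c) :
    σ β (inv β) * σ α (inv α) = σ α β * σ (α ≫ β) (inv (α ≫ β)) * σ (inv β) (inv α) := by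
  have h₁ := hcoc α β (inv β ≫ inv α)
  have h₂ := hcoc β (inv β) (inv α)
  simp only [IsIso.hom_inv_id_assoc, IsIso.hom_inv_id, hnl, mul_one] at h₁ h₂
  rw [IsIso.inv_comp]
  linear_combination σ α (inv α) * h₂ - σ (inv β) (inv α) * h₁

lemma conj_cocycle_inv_comp
    (hmod : ∀ {a b c : G} (f : a ⟶ b) (g : b ⟶ c), ‖σ f g‖ = 1)
    (hcoc : ∀ {a b c d : G} (f : a ⟶ b) (g : b ⟶ c) (h : c ⟶ d),
      σ f g * σ (f ≫ g) h = σ g h * σ f (g ≫ h))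
    (hnl : ∀ {a b : G} (g : a ⟶ b), σ (𝟙 a) g = 1)
    {a b c : G} (α : a ⟶ b) (β : b ⟶ c) :
    conj (σ (α ≫ β) (inv (α ≫ β))) * conj (σ (inv β) (inv α)) =
      conj (σ α (inv α)) * conj (σ β (inv β)) * σ α β := by
  have key := congrArg conj (cocycle_inv_comp σ hcoc hnl α β)
  have hunit : conj (σ α β) * σ α β = 1 := by
    rw [← Complex.normSq_eq_conj_mul_self, Complex.normSq_eq_norm_sq, hmod, one_pow,
      Complex.ofReal_one]
  simp only [map_mul] at key
  linear_combination (-σ α β) * key -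
    conj (σ (α ≫ β) (inv (α ≫ β))) * conj (σ (inv β) (inv α)) * hunit

lemma twistedAdj_apply (f : ∀ a b : G, (a ⟶ b) → ℂ) {a b : G} (γ : a ⟶ b) :
    twistedAdj σ f a b γ = conj (σ γ (inv γ)) * conj (f b a (inv γ)) := by
  simp only [twistedAdj, Groupoid.inv_eq_inv]

end Groupoid

section FiniteGroupoid

variable {G : Type*} [Groupoid G] [Fintype G] [∀ a b : G, Fintype (a ⟶ b)]
  (σ : ∀ {a b c : G}, (a ⟶ b) → (b ⟶ c) → ℂ) (f g : ∀ a b : G, (a ⟶ b) → ℂ)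

lemma twistedConv_apply_eq_sum_fst {a c : G} (γ : a ⟶ c) :
    twistedConv σ f g a c γ =
      ∑ b : G, ∑ α : a ⟶ b, f a b α * g b c (inv α ≫ γ) * σ α (inv α ≫ γ) := by
  classical
  unfold twistedConv
  refine Fintype.sum_congr _ _ fun b => Fintype.sum_congr _ _ fun α => ?_
  simp_rw [← IsIso.eq_inv_comp]
  exact Fintype.sum_ite_eq' _ _

lemma twistedConv_apply_eq_sum_snd {a c : G} (γ : a ⟶ c) :
    twistedConv σ f g a c γ =
      ∑ b : G, ∑ β : b ⟶ c, f a b (γ ≫ inv β) * g b c β * σ (γ ≫ inv β) β := by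
  classical
  unfold twistedConv
  refine Fintype.sum_congr _ _ fun b => ?_
  rw [Finset.sum_comm]
  refine Fintype.sum_congr _ _ fun β => ?_
  simp_rw [← IsIso.eq_comp_inv]
  exact Fintype.sum_ite_eq' _ _

end FiniteGroupoid

/-- Twisted involution is anti-multiplicative: for a groupoid
with finitely many objects and finite hom-sets and a normalized unimodular
`2`-cocycle `σ`, one has `(f ∗_σ g)* = g* ∗_σ f*` for all `ℂ`-valued
functions `f g` on the morphisms of `G`. -/
theorem twistedAdj_conv {G : Type*} [Groupoid G] [Fintype G]
    [∀ a b : G, Fintype (a ⟶ b)]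
    (σ : ∀ {a b c : G}, (a ⟶ b) → (b ⟶ c) → ℂ)
    (hmod : ∀ {a b c : G} (f : a ⟶ b) (g : b ⟶ c), ‖σ f g‖ = 1)
    (hcoc : ∀ {a b c d : G} (f : a ⟶ b) (g : b ⟶ c) (h : c ⟶ d),
      σ f g * σ (f ≫ g) h = σ g h * σ f (g ≫ h))
    (hnl : ∀ {a b : G} (g : a ⟶ b), σ (𝟙 a) g = 1)
    (hnr : ∀ {a b : G} (f : a ⟶ b), σ f (𝟙 b) = 1)
    (f g : ∀ a b : G, (a ⟶ b) → ℂ) :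
    twistedAdj σ (twistedConv σ f g) =
      twistedConv σ (twistedAdj σ g) (twistedAdj σ f) := by
  funext a c γ
  rw [twistedAdj_apply, twistedConv_apply_eq_sum_snd, twistedConv_apply_eq_sum_fst]
  simp only [map_sum, Finset.mul_sum]
  refine Fintype.sum_congr _ _ fun b => ?_
  rw [← (Groupoid.invEquiv (X := a) (Y := b)).sum_comp]
  refine Fintype.sum_congr _ _ fun α => ?_
  have key := conj_cocycle_inv_comp σ hmod hcoc hnl α (inv α ≫ γ)
  simp only [IsIso.hom_inv_id_assoc, IsIso.inv_comp, IsIso.inv_inv] at key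
  simp only [Groupoid.invEquiv_apply, Groupoid.inv_eq_inv, twistedAdj_apply, map_mul,
    IsIso.inv_inv, IsIso.inv_comp]
  linear_combination conj (f c b (inv γ ≫ α)) * conj (g b a (inv α)) * key
end
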